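/- arXiv:2111.12981 — 4 statements merged into one kernel-verified Lean document; each statement's English description precedes it below -/
import Mathlib

section
/- Let H ⊆ ℝ^d be a measurable set of candidates with finite positive Lebesgue measure, and let s : H → ℝ be a measurable score function. Let M_E be the exponential mechanism selecting h ∈ H with density proportional to exp(ε·s(h)/(2Δ)). Let H* ⊆ H be a measurable subset with positive measure and let OPT ≤ inf_{h ∈ H*} s(h). Then for every t ≥ 0, the probability that M_E outputs h with s(h) ≤ OPT − (2Δ/ε)(ln(vol(H)/vol(H*)) + t) is at most exp(−t). -/
open MeasureTheory

/-!
On the good set `H*` the density is at least `exp(ε·OPT/(2Δ))`, so the normalizing integral is at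
least `vol(H*)·exp(ε·OPT/(2Δ))`. On the bad set the density is at most
`exp(ε·OPT/(2Δ))·(vol H*/vol H)·e^{-t}`, and the bad set has volume at most `vol H`, so its
unnormalized mass is at most `vol(H*)·exp(ε·OPT/(2Δ))·e^{-t}`. The factor `vol H*/vol H` is exactly
what the `ln(vol H/vol H*)` shift of the threshold buys.
-/

section

variable {α : Type*} [MeasurableSpace α] {μ : Measure α} {w : α → ℝ} {B S H : Set α}

theorem setIntegral_le_mul_measureReal_of_le {M : ℝ} (hB : μ B < ⊤) (hw0 : 0 ≤ w)
    (hwM : ∀ x ∈ B, w x ≤ M) : ∫ x in B, w x ∂μ ≤ M * μ.real B :=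
  (Real.le_norm_self _).trans <| norm_setIntegral_le_of_norm_le_const hB fun x hx => by
    rw [Real.norm_of_nonneg (hw0 x)]
    exact hwM x hx

theorem mul_measureReal_le_setIntegral_of_subset {m : ℝ} (hS : MeasurableSet S) (hSH : S ⊆ H)
    (hH : μ H ≠ ⊤) (hw : IntegrableOn w H μ) (hw0 : 0 ≤ w)
    (hmw : ∀ x ∈ S, m ≤ w x) : m * μ.real S ≤ ∫ x in H, w x ∂μ :=
  calc m * μ.real S ≤ ∫ x in S, w x ∂μ :=
        setIntegral_ge_of_const_le_real hS (measure_ne_top_of_subset hSH hH) hmw (hw.mono_set hSH)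
    _ ≤ ∫ x in H, w x ∂μ :=
        setIntegral_mono_set hw (.of_forall hw0) hSH.eventuallyLE

theorem setIntegral_div_setIntegral_le {m r : ℝ} (hS : MeasurableSet S) (hSH : S ⊆ H)
    (hBH : B ⊆ H) (hH : μ H < ⊤) (hS0 : 0 < μ S) (hw : IntegrableOn w H μ)
    (hw0 : 0 ≤ w) (hm : 0 < m) (hr : 0 ≤ r) (hmw : ∀ x ∈ S, m ≤ w x)
    (hwB : ∀ x ∈ B, w x ≤ m * (μ.real S / μ.real H) * r) :
    (∫ x in B, w x ∂μ) / ∫ x in H, w x ∂μ ≤ r := by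
  have hSreal : 0 < μ.real S := ENNReal.toReal_pos hS0.ne' (measure_ne_top_of_subset hSH hH.ne)
  have hHreal : 0 < μ.real H := hSreal.trans_le (measureReal_mono hSH hH.ne)
  have hden := mul_measureReal_le_setIntegral_of_subset hS hSH hH.ne hw hw0 hmw
  have hnum : ∫ x in B, w x ∂μ ≤ m * μ.real S * r :=
    calc ∫ x in B, w x ∂μ ≤ m * (μ.real S / μ.real H) * r * μ.real B :=
          setIntegral_le_mul_measureReal_of_le ((measure_mono hBH).trans_lt hH) hw0 hwB
      _ ≤ m * (μ.real S / μ.real H) * r * μ.real H := by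
          gcongr
          exact hH.ne
      _ = m * μ.real S * r := by field_simp
  rw [div_le_iff₀ ((mul_pos hm hSreal).trans_le hden)]
  exact hnum.trans ((mul_le_mul_of_nonneg_right hden hr).trans_eq (mul_comm _ _))

end

theorem exp_le_of_le_sub_mul_log {ε Δ x OPT t a b : ℝ} (hε : 0 < ε) (hΔ : 0 < Δ) (ha : 0 < a)
    (hb : 0 < b) (hx : x ≤ OPT - (2 * Δ / ε) * (Real.log (a / b) + t)) :
    Real.exp (ε * x / (2 * Δ)) ≤ Real.exp (ε * OPT / (2 * Δ)) * (b / a) * Real.exp (-t) := by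
  have hshift : ε * x / (2 * Δ) ≤ ε * OPT / (2 * Δ) - Real.log (a / b) - t := by
    calc ε * x / (2 * Δ) ≤ ε * (OPT - (2 * Δ / ε) * (Real.log (a / b) + t)) / (2 * Δ) := by
          gcongr
      _ = ε * OPT / (2 * Δ) - Real.log (a / b) - t := by field_simp; ring
  calc Real.exp (ε * x / (2 * Δ)) ≤ Real.exp (ε * OPT / (2 * Δ) - Real.log (a / b) - t) :=
        Real.exp_le_exp.2 hshift
    _ = Real.exp (ε * OPT / (2 * Δ)) * (b / a) * Real.exp (-t) := by
        rw [sub_eq_add_neg, sub_eq_add_neg, Real.exp_add, Real.exp_add, ← Real.log_inv, inv_div,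
          Real.exp_log (div_pos hb ha)]

theorem exponential_mechanism_volume_general {d : ℕ}
    (H Hstar : Set (EuclideanSpace ℝ (Fin d)))
    (hHstar : MeasurableSet Hstar) (hsub : Hstar ⊆ H)
    (hHfin : volume H < ⊤) (hHstarpos : 0 < volume Hstar)
    (s : EuclideanSpace ℝ (Fin d) → ℝ)
    (ε Δ OPT t : ℝ) (hε : 0 < ε) (hΔ : 0 < Δ)
    (hOPT : ∀ h ∈ Hstar, OPT ≤ s h)
    (hint : IntegrableOn (fun h => Real.exp (ε * s h / (2 * Δ))) H) :
    (∫ h in {h | h ∈ H ∧ s h ≤ OPT - (2 * Δ / ε) *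
        (Real.log ((volume H).toReal / (volume Hstar).toReal) + t)},
      Real.exp (ε * s h / (2 * Δ))) /
      (∫ h in H, Real.exp (ε * s h / (2 * Δ))) ≤ Real.exp (-t) := by
  have hHstarfin : volume Hstar < ⊤ := (measure_mono hsub).trans_lt hHfin
  have hHreal : 0 < (volume H).toReal :=
    ENNReal.toReal_pos (hHstarpos.trans_le (measure_mono hsub)).ne' hHfin.ne
  have hHstarreal : 0 < (volume Hstar).toReal := ENNReal.toReal_pos hHstarpos.ne' hHstarfin.ne
  refine setIntegral_div_setIntegral_le hHstar hsub (fun _ hh => hh.1) hHfin hHstarpos hint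
    (fun _ => (Real.exp_pos _).le) (Real.exp_pos (ε * OPT / (2 * Δ))) (Real.exp_nonneg _) ?_ ?_
  · exact fun h hh => Real.exp_le_exp.2 (by gcongr; exact hOPT h hh)
  · exact fun h hh => exp_le_of_le_sub_mul_log hε hΔ hHreal hHstarreal hh.2

/-- Volume-based utility of the exponential mechanism: the output distribution has
density proportional to `exp(ε s(h)/(2Δ))` on `H`; the probability of outputting a
candidate with score at most `OPT - (2Δ/ε)(ln(vol H / vol H*) + t)` is at most `e^{-t}`. -/
theorem exponential_mechanism_volume {d : ℕ}
    (H Hstar : Set (EuclideanSpace ℝ (Fin d)))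
    (hH : MeasurableSet H) (hHstar : MeasurableSet Hstar) (hsub : Hstar ⊆ H)
    (hHpos : 0 < volume H) (hHfin : volume H < ⊤) (hHstarpos : 0 < volume Hstar)
    (s : EuclideanSpace ℝ (Fin d) → ℝ) (hs : Measurable s)
    (ε Δ OPT t : ℝ) (hε : 0 < ε) (hΔ : 0 < Δ) (ht : 0 ≤ t)
    (hOPT : ∀ h ∈ Hstar, OPT ≤ s h)
    (hint : IntegrableOn (fun h => Real.exp (ε * s h / (2 * Δ))) H) :
    (∫ h in {h | h ∈ H ∧ s h ≤ OPT - (2 * Δ / ε) *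
        (Real.log ((volume H).toReal / (volume Hstar).toReal) + t)},
      Real.exp (ε * s h / (2 * Δ))) /
      (∫ h in H, Real.exp (ε * s h / (2 * Δ))) ≤ Real.exp (-t) :=
  exponential_mechanism_volume_general H Hstar hHstar hsub hHfin hHstarpos s ε Δ OPT t hε hΔ hOPT
    hint
end

section
/- Let Z₁,...,Z_k, μ̃, μ ∈ ℝ^d, and write Δ = (μ − μ̃)/‖μ − μ̃‖. Suppose: (i) there is a set G ⊆ {1,...,k} with |G| ≥ (1 − 1/M)k such that ⟨Z_i − μ, −y⟩ ≤ 5Mr* for all i ∈ G; (ii) ⟨y, Δ⟩ > 0 and |⟨y, Δ⟩| > 0.1; (iii) ‖μ − μ̃‖ ≥ 5M²r*; and (iv) M ≥ 1000, r* > 0. Then |{i : ⟨Z_i − μ̃, y⟩ > 0}| ≥ (1 − 1/M)k. -/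
open EuclideanSpace

notation "⟪" x ", " y "⟫" => @inner ℝ _ _ x y

section

variable {E : Type*} [NormedAddCommGroup E] [InnerProductSpace ℝ E]

lemma mul_norm_lt_inner_of_lt_inner_normalize {y v : E} {c : ℝ} (hv : v ≠ 0)
    (h : c < ⟪y, ‖v‖⁻¹ • v⟫) : c * ‖v‖ < ⟪y, v⟫ := by
  have hnorm : 0 < ‖v‖ := norm_pos_iff.mpr hv
  rw [real_inner_smul_right] at h
  calc c * ‖v‖ < ‖v‖⁻¹ * ⟪y, v⟫ * ‖v‖ := mul_lt_mul_of_pos_right h hnorm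
    _ = ⟪y, v⟫ := by field_simp

lemma inner_sub_pos_of_inner_sub_neg_le {z μ μt y : E} {s : ℝ}
    (hz : ⟪z - μ, -y⟫ ≤ s) (hshift : s < ⟪y, μ - μt⟫) : 0 < ⟪z - μt, y⟫ := by
  have hsplit : ⟪z - μt, y⟫ = ⟪z - μ, y⟫ + ⟪y, μ - μt⟫ := by
    rw [real_inner_comm (μ - μt) y, ← inner_add_left, sub_add_sub_cancel]
  rw [inner_neg_right] at hz
  linarith

end

lemma five_mul_mul_lt_of_le {M r D : ℝ} (hM : 10 < M) (hr : 0 < r)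
    (hD : 5 * M ^ 2 * r ≤ D) : 5 * M * r < 0.1 * D := by
  have hMr : 0 < M * r := by positivity
  nlinarith

theorem good_direction_general {d k : ℕ}
    (Z : Fin k → EuclideanSpace ℝ (Fin d)) (μt μ y : EuclideanSpace ℝ (Fin d))
    (M rstar : ℝ) (hM : 1000 ≤ M) (hr : 0 < rstar)
    (G : Finset (Fin k)) (hGcard : (1 - 1 / M) * k ≤ (G.card : ℝ))
    (hG : ∀ i ∈ G, ⟪Z i - μ, -y⟫ ≤ 5 * M * rstar)
    (hpos : 0 < ⟪y, ‖μ - μt‖⁻¹ • (μ - μt)⟫)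
    (hcorr : 0.1 < |⟪y, ‖μ - μt‖⁻¹ • (μ - μt)⟫|)
    (hfar : 5 * M ^ 2 * rstar ≤ ‖μ - μt‖) :
    (1 - 1 / M) * k ≤
      ((Finset.univ.filter fun i => 0 < ⟪Z i - μt, y⟫).card : ℝ) := by
  have hM0 : 0 < M := by linarith
  have hne : μ - μt ≠ 0 :=
    norm_pos_iff.mp ((by positivity : 0 < 5 * M ^ 2 * rstar).trans_le hfar)
  have hcorr_pos : 0.1 < ⟪y, ‖μ - μt‖⁻¹ • (μ - μt)⟫ := abs_of_pos hpos ▸ hcorr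
  have hshift : 5 * M * rstar < ⟪y, μ - μt⟫ :=
    (five_mul_mul_lt_of_le (by linarith) hr hfar).trans
      (mul_norm_lt_inner_of_lt_inner_normalize hne hcorr_pos)
  have hsub : G ⊆ Finset.univ.filter fun i => 0 < ⟪Z i - μt, y⟫ := fun i hi =>
    Finset.mem_filter.mpr
      ⟨Finset.mem_univ i, inner_sub_pos_of_inner_sub_neg_le (hG i hi) hshift⟩
  exact hGcard.trans (by exact_mod_cast Finset.card_le_card hsub)

/-- If a candidate direction `y` has nontrivial correlation with
`Δ = (μ - μ̃)/‖μ - μ̃‖` and most points `Z_i` satisfy `⟨Z_i - μ, -y⟩ ≤ 5Mr*`,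
then most points satisfy `⟨Z_i - μ̃, y⟩ > 0`. -/
theorem good_direction {d k : ℕ}
    (Z : Fin k → EuclideanSpace ℝ (Fin d)) (μt μ y : EuclideanSpace ℝ (Fin d))
    (M rstar : ℝ) (hM : 1000 ≤ M) (hr : 0 < rstar)
    (hne : μ ≠ μt)
    (G : Finset (Fin k)) (hGcard : (1 - 1 / M) * k ≤ (G.card : ℝ))
    (hG : ∀ i ∈ G, ⟪Z i - μ, -y⟫ ≤ 5 * M * rstar)
    (hpos : 0 < ⟪y, ‖μ - μt‖⁻¹ • (μ - μt)⟫)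
    (hcorr : 0.1 < |⟪y, ‖μ - μt‖⁻¹ • (μ - μt)⟫|)
    (hfar : 5 * M ^ 2 * rstar ≤ ‖μ - μt‖) :
    (1 - 1 / M) * k ≤
      ((Finset.univ.filter fun i => 0 < ⟪Z i - μt, y⟫).card : ℝ) :=
  good_direction_general Z μt μ y M rstar hM hr G hGcard hG hpos hcorr hfar
end

section
/- Let P = {P₁,...,P_m} be probability distributions and P_O a distribution with total variation distance d_TV(P_i, P_O) ≤ γ for all i. Let G₁,...,G_m be pairwise disjoint measurable subsets of an output space. Suppose M is an ε-differentially private algorithm taking n-element datasets such that Pr_{X ∼ P_i^n}[M(X) ∈ G_i] ≥ 1 − β for all i, where β < 1. Then n ≥ Ω((log m + log(1/β)) / (γ(e^{2ε} − 1))); concretely, 1 − β ≤ exp(nγ(e^{2ε} − 1)) · √(β/(m−1)). -/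
/-
A hybrid argument: the samples from `P ℓ` are replaced by samples from `P i₀` one coordinate
at a time. If a function `g` of one coordinate takes values in `[a, e^ε a]`, with `a` its
infimum, then `g - a` takes values in `[0, (e^ε - 1) a]`; since `P ℓ` and `P i₀` are `2γ`-close
in total variation, the mean of `g` grows by at most `2γ (e^ε - 1) a ≤ 2γ (e^ε - 1) 𝔼 g`.
By `ε`-differential privacy this applies to every one-coordinate section of
`X ↦ Pr[M X ∈ G ℓ]`, so `n` exchanges give
`Pr_{P ℓ}[M ∈ G ℓ] ≤ (1 + 2γ (e^ε - 1))^n Pr_{P i₀}[M ∈ G ℓ]`. As the `G i` are disjoint,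
some `ℓ ≠ i₀` has `Pr_{P i₀}[M ∈ G ℓ] ≤ β / (m - 1)`. The resulting bound
`1 - β ≤ (1 + 2γ (e^ε - 1))^n β / (m - 1)` implies the claim, because
`2 (e^ε - 1) ≤ e^{2ε} - 1` and `β / (m - 1) ≤ √(β / (m - 1))`.
-/

open MeasureTheory Set Function
open scoped ENNReal

theorem ENNReal.le_add_ofReal_of_abs_toReal_sub_le {a b : ℝ≥0∞} (ha : a ≠ ∞) {c γ : ℝ}
    (hac : |a.toReal - c| ≤ γ) (hbc : |b.toReal - c| ≤ γ) : a ≤ b + ENNReal.ofReal (2 * γ) :=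
  calc a = ENNReal.ofReal a.toReal := (ENNReal.ofReal_toReal ha).symm
    _ ≤ ENNReal.ofReal (b.toReal + 2 * γ) := by
        gcongr
        linarith [abs_le.1 hac, abs_le.1 hbc]
    _ ≤ b + ENNReal.ofReal (2 * γ) :=
        ENNReal.ofReal_add_le.trans (by gcongr; exact ENNReal.ofReal_toReal_le)

section Hybrid

variable {α : Type*} [MeasurableSpace α] {μ ν : Measure α} {p : ℝ≥0∞}

theorem lintegral_le_one_of_le_one [IsProbabilityMeasure μ] {f : α → ℝ≥0∞} (hf : ∀ x, f x ≤ 1) :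
    ∫⁻ x, f x ∂μ ≤ 1 :=
  (lintegral_mono hf).trans_eq (by simp)

theorem lintegral_le_lintegral_add_mul_of_measure_le_add
    (hμν : ∀ s, MeasurableSet s → μ s ≤ ν s + p) {f : α → ℝ≥0∞} (hf : Measurable f)
    {c : ℝ≥0∞} (hc : c ≠ ∞) (hfc : ∀ x, f x ≤ c) :
    ∫⁻ x, f x ∂μ ≤ ∫⁻ x, f x ∂ν + c * p := by
  set h : α → ℝ := fun x => (f x).toReal
  have hfh : f = fun x => ENNReal.ofReal (h x) :=
    funext fun x => (ENNReal.ofReal_toReal (ne_top_of_le_ne_top hc (hfc x))).symm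
  have hh : Measurable h := hf.ennreal_toReal
  have h_nonneg : ∀ κ : Measure α, 0 ≤ᵐ[κ] h :=
    fun _ => Filter.Eventually.of_forall fun _ => ENNReal.toReal_nonneg
  have level_le : ∀ t,
      μ {x | t ≤ h x} ≤ ν {x | t ≤ h x} + (Iic c.toReal).indicator (fun _ => p) t := by
    intro t
    by_cases ht : t ≤ c.toReal
    · rw [indicator_of_mem (mem_Iic.2 ht)]
      exact hμν _ (hh measurableSet_Ici)
    · have : {x | t ≤ h x} = ∅ := eq_empty_of_forall_notMem fun x hx =>
        ht (hx.trans (ENNReal.toReal_mono hc (hfc x)))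
      simp [this]
  rw [hfh, lintegral_eq_lintegral_meas_le μ (h_nonneg μ) hh.aemeasurable,
    lintegral_eq_lintegral_meas_le ν (h_nonneg ν) hh.aemeasurable]
  calc ∫⁻ t in Ioi 0, μ {x | t ≤ h x}
      ≤ ∫⁻ t in Ioi 0, (ν {x | t ≤ h x} + (Iic c.toReal).indicator (fun _ => p) t) :=
        lintegral_mono level_le
    _ = (∫⁻ t in Ioi 0, ν {x | t ≤ h x}) + c * p := by
        rw [lintegral_add_right _ (measurable_const.indicator measurableSet_Iic),
          lintegral_indicator_const measurableSet_Iic, Measure.restrict_apply measurableSet_Iic,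
          Iic_inter_Ioi, Real.volume_Ioc, sub_zero, ENNReal.ofReal_toReal hc, mul_comm]

theorem lintegral_le_one_add_mul_lintegral [IsProbabilityMeasure μ] [IsProbabilityMeasure ν]
    (hμν : ∀ s, MeasurableSet s → μ s ≤ ν s + p) {g : α → ℝ≥0∞} (hg : Measurable g)
    (hg_fin : ∀ x, g x ≠ ∞) {C : ℝ≥0∞} (hC : C ≠ ∞) (hgC : ∀ x y, g x ≤ C * g y) :
    ∫⁻ x, g x ∂μ ≤ (1 + p * (C - 1)) * ∫⁻ x, g x ∂ν := by
  have : Nonempty α := nonempty_of_isProbabilityMeasure μ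
  set a := ⨅ y, g y
  have ha_le : ∀ x, a ≤ g x := iInf_le g
  have ha_fin : a ≠ ∞ := ne_top_of_le_ne_top (hg_fin (Classical.arbitrary α)) (ha_le _)
  have hg_sub : ∀ x, g x - a ≤ (C - 1) * a := fun x => tsub_le_iff_right.2 <|
    calc g x ≤ C * a := by rw [ENNReal.mul_iInf (by simp [hC])]; exact le_iInf (hgC x)
      _ ≤ (C - 1 + 1) * a := by gcongr; exact le_tsub_add
      _ = (C - 1) * a + a := by rw [add_mul, one_mul]
  have hsplit (κ : Measure α) [IsProbabilityMeasure κ] :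
      ∫⁻ x, g x ∂κ = a + ∫⁻ x, (g x - a) ∂κ :=
    calc ∫⁻ x, g x ∂κ = ∫⁻ x, (a + (g x - a)) ∂κ :=
          lintegral_congr fun x => (add_tsub_cancel_of_le (ha_le x)).symm
      _ = a + ∫⁻ x, (g x - a) ∂κ := by
          rw [lintegral_add_left measurable_const, lintegral_const, measure_univ, mul_one]
  calc ∫⁻ x, g x ∂μ = a + ∫⁻ x, (g x - a) ∂μ := hsplit μ
    _ ≤ a + (∫⁻ x, (g x - a) ∂ν + (C - 1) * a * p) := by
        gcongr
        exact lintegral_le_lintegral_add_mul_of_measure_le_add hμν (hg.sub measurable_const)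
          (by finiteness) hg_sub
    _ = ∫⁻ x, g x ∂ν + p * (C - 1) * a := by rw [hsplit ν]; ring
    _ ≤ ∫⁻ x, g x ∂ν + p * (C - 1) * ∫⁻ x, g x ∂ν := by
        gcongr
        rw [hsplit ν]
        exact le_self_add
    _ = (1 + p * (C - 1)) * ∫⁻ x, g x ∂ν := by ring

theorem measurable_fin_cons {n : ℕ} :
    Measurable fun z : α × (Fin n → α) => (Fin.cons z.1 z.2 : Fin (n + 1) → α) :=
  measurable_pi_lambda _ fun i => by
    cases i using Fin.cases <;> simp only [Fin.cons_zero, Fin.cons_succ] <;> fun_prop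

theorem lintegral_pi_fin_succ (μ : Measure α) [SigmaFinite μ] {n : ℕ}
    {f : (Fin (n + 1) → α) → ℝ≥0∞} (hf : Measurable f) :
    ∫⁻ X, f X ∂(Measure.pi fun _ => μ) =
      ∫⁻ x, ∫⁻ Y, f (Fin.cons x Y) ∂(Measure.pi fun _ => μ) ∂μ := by
  have hcons := (measurePreserving_piFinSuccAbove (fun _ : Fin (n + 1) => μ) 0).symm
  rw [← hcons.lintegral_comp hf]
  refine (lintegral_prod _ (hf.comp hcons.measurable).aemeasurable).trans ?_
  simp [MeasurableEquiv.piFinSuccAbove_symm_apply, Fin.consEquiv]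

theorem lintegral_pi_le_pow_mul_lintegral_pi [IsProbabilityMeasure μ] [IsProbabilityMeasure ν]
    (hμν : ∀ s, MeasurableSet s → μ s ≤ ν s + p) {C : ℝ≥0∞} (hC : C ≠ ∞) :
    ∀ {n : ℕ} {f : (Fin n → α) → ℝ≥0∞}, Measurable f → (∀ X, f X ≤ 1) →
      (∀ X j x, f X ≤ C * f (update X j x)) →
      ∫⁻ X, f X ∂(Measure.pi fun _ => μ) ≤
        (1 + p * (C - 1)) ^ n * ∫⁻ X, f X ∂(Measure.pi fun _ => ν)
  | 0, f, _, _, _ => by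
    rw [show f = fun _ => f default from funext fun X => congrArg f (Subsingleton.elim X _)]
    simp
  | n + 1, f, hf, hf_le, hfC => by
    have hsection : ∀ x, Measurable fun Y : Fin n → α => f (Fin.cons x Y) :=
      fun x => (hf.comp measurable_fin_cons).comp measurable_prodMk_left
    set F : α → ℝ≥0∞ := fun x => ∫⁻ Y, f (Fin.cons x Y) ∂(Measure.pi fun _ => ν)
    have hF : Measurable F :=
      (hf.comp measurable_fin_cons).lintegral_prod_right'
    have hF_le : ∀ x, F x ≤ 1 := fun x => lintegral_le_one_of_le_one fun Y => hf_le _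
    have hFC : ∀ x x', F x ≤ C * F x' := fun x x' =>
      calc F x ≤ ∫⁻ Y, C * f (Fin.cons x' Y) ∂(Measure.pi fun _ => ν) :=
            lintegral_mono fun Y => by simpa [Fin.update_cons_zero] using hfC (Fin.cons x Y) 0 x'
        _ = C * F x' := lintegral_const_mul' _ _ hC
    rw [lintegral_pi_fin_succ μ hf, lintegral_pi_fin_succ ν hf]
    calc ∫⁻ x, ∫⁻ Y, f (Fin.cons x Y) ∂(Measure.pi fun _ => μ) ∂μ
        ≤ ∫⁻ x, (1 + p * (C - 1)) ^ n * F x ∂μ := lintegral_mono fun x =>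
          lintegral_pi_le_pow_mul_lintegral_pi hμν hC (hsection x) (fun Y => hf_le _)
            fun Y j y => by simpa [Fin.cons_update] using hfC (Fin.cons x Y) j.succ y
      _ = (1 + p * (C - 1)) ^ n * ∫⁻ x, F x ∂μ := lintegral_const_mul _ hF
      _ ≤ (1 + p * (C - 1)) ^ n * ((1 + p * (C - 1)) * ∫⁻ x, F x ∂ν) := by
          gcongr
          exact lintegral_le_one_add_mul_lintegral hμν hF
            (fun x => ne_top_of_le_ne_top ENNReal.one_ne_top (hF_le x)) hC hFC
      _ = (1 + p * (C - 1)) ^ (n + 1) * ∫⁻ x, F x ∂ν := by ring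

theorem toReal_lintegral_pi_le_pow_mul_toReal_lintegral_pi [IsProbabilityMeasure μ]
    [IsProbabilityMeasure ν] {p C : ℝ}
    (hμν : ∀ s, MeasurableSet s → μ s ≤ ν s + ENNReal.ofReal p) (hp : 0 ≤ p) (hC : 1 ≤ C)
    {n : ℕ} {f : (Fin n → α) → ℝ≥0∞} (hf : Measurable f)
    (hf_le : ∀ X, f X ≤ 1) (hfC : ∀ X j x, f X ≤ ENNReal.ofReal C * f (update X j x)) :
    (∫⁻ X, f X ∂(Measure.pi fun _ => μ)).toReal ≤
      (1 + p * (C - 1)) ^ n * (∫⁻ X, f X ∂(Measure.pi fun _ => ν)).toReal := by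
  have hpC : 0 ≤ p * (C - 1) := mul_nonneg hp (sub_nonneg.2 hC)
  have hK : 1 + ENNReal.ofReal p * (ENNReal.ofReal C - 1) = ENNReal.ofReal (1 + p * (C - 1)) := by
    rw [← ENNReal.ofReal_one, ← ENNReal.ofReal_sub _ zero_le_one, ← ENNReal.ofReal_mul hp,
      ← ENNReal.ofReal_add zero_le_one hpC]
  have h := lintegral_pi_le_pow_mul_lintegral_pi hμν ENNReal.ofReal_ne_top hf hf_le hfC
  rw [hK] at h
  have h_fin : ∫⁻ X, f X ∂(Measure.pi fun _ => ν) ≠ ∞ :=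
    ne_top_of_le_ne_top ENNReal.one_ne_top (lintegral_le_one_of_le_one hf_le)
  have := ENNReal.toReal_mono (ENNReal.mul_ne_top (by finiteness) h_fin) h
  rwa [ENNReal.toReal_mul, ENNReal.toReal_pow, ENNReal.toReal_ofReal (by positivity)] at this

end Hybrid

theorem exists_ne_le_div_of_sum_le {ι : Type*} [Fintype ι] (a : ι → ℝ) (i : ι)
    (hι : 1 < Fintype.card ι) {b : ℝ} (h : ∑ j, a j ≤ a i + b) :
    ∃ j ≠ i, a j ≤ b / (Fintype.card ι - 1) := by
  classical
  have hcard : (Finset.univ.erase i).card = Fintype.card ι - 1 := by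
    rw [Finset.card_erase_of_mem (Finset.mem_univ i), Finset.card_univ]
  have hcardR : ((Fintype.card ι - 1 : ℕ) : ℝ) = Fintype.card ι - 1 := by
    rw [Nat.cast_sub hι.le, Nat.cast_one]
  have hsum : ∑ j ∈ Finset.univ.erase i, a j ≤
      ∑ _j ∈ Finset.univ.erase i, b / (Fintype.card ι - 1) := by
    have hpos : (0 : ℝ) < Fintype.card ι - 1 := by
      rw [← hcardR]; exact_mod_cast Nat.sub_pos_of_lt hι
    rw [Finset.sum_const, hcard, nsmul_eq_mul, hcardR, mul_div_cancel₀ _ hpos.ne']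
    linarith [Finset.add_sum_erase Finset.univ a (Finset.mem_univ i)]
  obtain ⟨j, hj, hle⟩ := Finset.exists_le_of_sum_le (Finset.card_pos.1 (by omega)) hsum
  exact ⟨j, Finset.ne_of_mem_erase hj, hle⟩

theorem sum_lintegral_measure_le_one {ι D Ω : Type*} [Fintype ι] [MeasurableSpace D]
    [MeasurableSpace Ω] {M : D → Measure Ω} (hM : ∀ X, IsProbabilityMeasure (M X))
    {G : ι → Set Ω} (hG : ∀ i, MeasurableSet (G i)) (hG_disj : Pairwise (Disjoint on G))
    (hMG : ∀ i, Measurable fun X => M X (G i)) (κ : Measure D) [IsProbabilityMeasure κ] :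
    ∑ i, ∫⁻ X, M X (G i) ∂κ ≤ 1 :=
  calc ∑ i, ∫⁻ X, M X (G i) ∂κ = ∫⁻ X, M X (⋃ i, G i) ∂κ := by
        rw [← lintegral_finsetSum _ fun i _ => hMG i]
        simp_rw [measure_iUnion hG_disj hG, tsum_fintype]
    _ ≤ ∫⁻ _, 1 ∂κ := lintegral_mono fun X => prob_le_one
    _ = 1 := by simp

theorem exists_ne_toReal_lintegral_measure_le {ι D Ω : Type*} [Fintype ι] [MeasurableSpace D]
    [MeasurableSpace Ω] {M : D → Measure Ω} (hM : ∀ X, IsProbabilityMeasure (M X))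
    {G : ι → Set Ω} (hG : ∀ i, MeasurableSet (G i)) (hG_disj : Pairwise (Disjoint on G))
    (hMG : ∀ i, Measurable fun X => M X (G i)) (κ : Measure D) [IsProbabilityMeasure κ]
    (hι : 1 < Fintype.card ι) {i : ι} {b : ℝ} (hi : 1 - b ≤ (∫⁻ X, M X (G i) ∂κ).toReal) :
    ∃ j ≠ i, (∫⁻ X, M X (G j) ∂κ).toReal ≤ b / (Fintype.card ι - 1) := by
  refine exists_ne_le_div_of_sum_le (fun j => (∫⁻ X, M X (G j) ∂κ).toReal) i hι ?_
  have h_fin : ∀ j, ∫⁻ X, M X (G j) ∂κ ≠ ∞ := fun j =>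
    ne_top_of_le_ne_top ENNReal.one_ne_top (lintegral_le_one_of_le_one fun X => prob_le_one)
  have := ENNReal.toReal_mono ENNReal.one_ne_top
    (sum_lintegral_measure_le_one hM hG hG_disj hMG κ)
  rw [ENNReal.toReal_sum fun j _ => h_fin j, ENNReal.toReal_one] at this
  linarith

theorem one_add_mul_pow_mul_le_exp_mul_sqrt (n : ℕ) {γ ε x : ℝ} (hγ : 0 ≤ γ) (hε : 0 ≤ ε)
    (hx₀ : 0 ≤ x) (hx₁ : x ≤ 1) :
    (1 + 2 * γ * (Real.exp ε - 1)) ^ n * x ≤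
      Real.exp (n * γ * (Real.exp (2 * ε) - 1)) * Real.sqrt x := by
  have hexp : 0 ≤ Real.exp ε - 1 := sub_nonneg.2 (Real.one_le_exp hε)
  have hbase : 1 + 2 * γ * (Real.exp ε - 1) ≤ Real.exp (γ * (Real.exp (2 * ε) - 1)) := by
    have : 2 * (Real.exp ε - 1) ≤ Real.exp (2 * ε) - 1 := by
      rw [show 2 * ε = ε + ε by ring, Real.exp_add]
      nlinarith [sq_nonneg (Real.exp ε - 1)]
    calc 1 + 2 * γ * (Real.exp ε - 1) ≤ 1 + γ * (Real.exp (2 * ε) - 1) := by nlinarith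
      _ ≤ _ := by linarith [Real.add_one_le_exp (γ * (Real.exp (2 * ε) - 1))]
  calc (1 + 2 * γ * (Real.exp ε - 1)) ^ n * x
      ≤ Real.exp (γ * (Real.exp (2 * ε) - 1)) ^ n * Real.sqrt x := by
        gcongr
        exact Real.le_sqrt_of_sq_le (by nlinarith)
    _ = _ := by rw [← Real.exp_nat_mul, mul_assoc]

theorem packing_lower_bound_general
    {𝓧 Ω : Type*} [MeasurableSpace 𝓧] [MeasurableSpace Ω]
    (n m : ℕ) (hm : 2 ≤ m)
    (P : Fin m → Measure 𝓧) (PO : Measure 𝓧)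
    (hP : ∀ i, IsProbabilityMeasure (P i))
    (γ : ℝ) (hγ : 0 < γ)
    (hTV : ∀ i (s : Set 𝓧), MeasurableSet s → |((P i) s).toReal - (PO s).toReal| ≤ γ)
    (G : Fin m → Set Ω) (hGmeas : ∀ i, MeasurableSet (G i))
    (hGdisj : Pairwise (Function.onFun Disjoint G))
    (M : (Fin n → 𝓧) → Measure Ω) (hMprob : ∀ X, IsProbabilityMeasure (M X))
    (hMmeas : ∀ s : Set Ω, MeasurableSet s → Measurable fun X => M X s)
    (ε : ℝ) (hε : 0 < ε)
    (hDP : ∀ X X' : Fin n → 𝓧, (∃ j, ∀ i, i ≠ j → X i = X' i) →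
      ∀ s : Set Ω, MeasurableSet s → M X s ≤ ENNReal.ofReal (Real.exp ε) * M X' s)
    (β : ℝ) (hβ1 : β < 1)
    (hacc : ∀ i, 1 - β ≤ (∫⁻ X, M X (G i) ∂(Measure.pi fun _ : Fin n => P i)).toReal) :
    1 - β ≤ Real.exp (n * γ * (Real.exp (2 * ε) - 1)) * Real.sqrt (β / ((m : ℝ) - 1)) := by
  have := hP
  let i₀ : Fin m := ⟨0, by omega⟩
  obtain ⟨ℓ, -, hℓ⟩ := exists_ne_toReal_lintegral_measure_le hMprob hGmeas hGdisj
    (fun i => hMmeas _ (hGmeas i)) _ (by simpa) (hacc i₀)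
  rw [Fintype.card_fin] at hℓ
  have hybrid := toReal_lintegral_pi_le_pow_mul_toReal_lintegral_pi
    (fun s hs => ENNReal.le_add_ofReal_of_abs_toReal_sub_le (measure_ne_top _ _)
      (hTV ℓ s hs) (hTV i₀ s hs))
    (by positivity) (Real.one_le_exp hε.le) (hMmeas _ (hGmeas ℓ)) (fun X => prob_le_one)
    fun X j x => hDP _ _ ⟨j, fun i hi => (update_of_ne hi _ _).symm⟩ _ (hGmeas ℓ)
  have hm' : (2 : ℝ) ≤ m := by exact_mod_cast hm
  calc 1 - β ≤ _ := hacc ℓ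
    _ ≤ _ := hybrid
    _ ≤ (1 + 2 * γ * (Real.exp ε - 1)) ^ n * (β / ((m : ℝ) - 1)) :=
        mul_le_mul_of_nonneg_left hℓ (pow_nonneg (by nlinarith [Real.one_le_exp hε.le]) n)
    _ ≤ _ := one_add_mul_pow_mul_le_exp_mul_sqrt n hγ.le hε.le (ENNReal.toReal_nonneg.trans hℓ)
          (div_le_one_of_le₀ (by linarith) (by linarith))

/-- Packing lower bound for pure differential privacy: if an `ε`-DP mechanism `M`
identifies each of `m` distributions (all within TV distance `γ` of a common
distribution) with probability `1 - β` into disjoint output sets, then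
`1 - β ≤ exp(nγ(e^{2ε} - 1)) √(β/(m-1))`. -/
theorem packing_lower_bound
    {𝓧 Ω : Type*} [MeasurableSpace 𝓧] [MeasurableSpace Ω]
    (n m : ℕ) (hm : 2 ≤ m)
    (P : Fin m → Measure 𝓧) (PO : Measure 𝓧)
    (hP : ∀ i, IsProbabilityMeasure (P i)) (hPO : IsProbabilityMeasure PO)
    (γ : ℝ) (hγ : 0 < γ)
    (hTV : ∀ i (s : Set 𝓧), MeasurableSet s → |((P i) s).toReal - (PO s).toReal| ≤ γ)
    (G : Fin m → Set Ω) (hGmeas : ∀ i, MeasurableSet (G i))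
    (hGdisj : Pairwise (Function.onFun Disjoint G))
    (M : (Fin n → 𝓧) → Measure Ω) (hMprob : ∀ X, IsProbabilityMeasure (M X))
    (hMmeas : ∀ s : Set Ω, MeasurableSet s → Measurable fun X => M X s)
    (ε : ℝ) (hε : 0 < ε)
    (hDP : ∀ X X' : Fin n → 𝓧, (∃ j, ∀ i, i ≠ j → X i = X' i) →
      ∀ s : Set Ω, MeasurableSet s → M X s ≤ ENNReal.ofReal (Real.exp ε) * M X' s)
    (β : ℝ) (hβ0 : 0 < β) (hβ1 : β < 1)
    (hacc : ∀ i, 1 - β ≤ (∫⁻ X, M X (G i) ∂(Measure.pi fun _ : Fin n => P i)).toReal) :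
    1 - β ≤ Real.exp (n * γ * (Real.exp (2 * ε) - 1)) * Real.sqrt (β / ((m : ℝ) - 1)) :=
  packing_lower_bound_general n m hm P PO hP γ hγ hTV G hGmeas hGdisj M hMprob hMmeas ε hε hDP β hβ1
    hacc
end

section
/- Fix Z₁,...,Z_k, μ̃ ∈ ℝ^d. For r ≥ 0, let SDP(μ̃, r, Z) denote the optimal value of the semidefinite program maximizing Tr(B) over symmetric PSD block matrices [[1, bᵀ, vᵀ],[b, B, W],[v, Wᵀ, V]] subject to B_{ii} = b_i for all i, Tr(V) = 1, and B_{ii}·r ≤ ⟨Z_i − μ̃, W_i⟩ for all i. Then SDP(μ̃, r, Z) is a nonincreasing function of r, and changing a single Z_i changes SDP(μ̃, r, Z) by at most 1 (sensitivity 1). -/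
open Matrix

/-- Feasible set of the SDP relaxation: symmetric PSD block matrices
`[[1, bᵀ, vᵀ],[b, B, W],[v, Wᵀ, V]]` with `B_{ii} = b_i`, `Tr V = 1`, and
`B_{ii} r ≤ ⟨Z_i - μ̃, W_i⟩`. -/
def sdpFeasible {k d : ℕ} (Z : Fin k → Fin d → ℝ) (μt : Fin d → ℝ) (r : ℝ)
    (Q : Matrix (Unit ⊕ Fin k ⊕ Fin d) (Unit ⊕ Fin k ⊕ Fin d) ℝ) : Prop :=
  Q.PosSemidef ∧
  Q (Sum.inl ()) (Sum.inl ()) = 1 ∧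
  (∀ i : Fin k, Q (Sum.inr (Sum.inl i)) (Sum.inr (Sum.inl i)) =
      Q (Sum.inl ()) (Sum.inr (Sum.inl i))) ∧
  (∑ j : Fin d, Q (Sum.inr (Sum.inr j)) (Sum.inr (Sum.inr j))) = 1 ∧
  (∀ i : Fin k, Q (Sum.inr (Sum.inl i)) (Sum.inr (Sum.inl i)) * r ≤
      ∑ j : Fin d, (Z i j - μt j) * Q (Sum.inr (Sum.inl i)) (Sum.inr (Sum.inr j)))

/-- The optimal value `SDP(μ̃, r, Z)` of the semidefinite program: the supremum
of `Tr B` over feasible solutions. -/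
noncomputable def sdpVal {k d : ℕ} (Z : Fin k → Fin d → ℝ) (μt : Fin d → ℝ)
    (r : ℝ) : ℝ :=
  sSup ((fun Q : Matrix (Unit ⊕ Fin k ⊕ Fin d) (Unit ⊕ Fin k ⊕ Fin d) ℝ =>
    ∑ i : Fin k, Q (Sum.inr (Sum.inl i)) (Sum.inr (Sum.inl i))) ''
      {Q | sdpFeasible Z μt r Q})

/-! The bound `B_{ii} ≤ 1` comes from the principal `2 × 2` minor `[[1, b_i], [b_i, B_{ii}]]`
of a feasible solution: together with `b_i = B_{ii}` it gives `B_{ii}² ≤ B_{ii}`. Monotonicity in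
`r` holds because every feasible solution for `r` stays feasible for `r' ≤ r`, as `B_{ii} ≥ 0`.
For sensitivity, zeroing the row and column of the index `i₀` where `Z` and `Z'` differ turns a
feasible solution for `Z` into one for `Z'` and costs exactly `B_{i₀i₀} ≤ 1` of objective. -/

namespace Matrix

open scoped ComplexOrder in
theorem PosSemidef.apply_mul_apply_le {n 𝕜 : Type*} [Fintype n] [RCLike 𝕜]
    {A : Matrix n n 𝕜} (hA : A.PosSemidef) (i j : n) :
    A i j * A j i ≤ A i i * A j j := by
  have hdet := (hA.submatrix ![i, j]).det_nonneg
  rw [det_fin_two] at hdet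
  simpa [sub_nonneg] using hdet

variable {n R : Type*} [DecidableEq n]

def zeroRowCol [Zero R] (A : Matrix n n R) (a : n) : Matrix n n R :=
  of fun i j => if i = a ∨ j = a then 0 else A i j

@[simp]
theorem zeroRowCol_apply [Zero R] (A : Matrix n n R) (a i j : n) :
    A.zeroRowCol a i j = if i = a ∨ j = a then 0 else A i j :=
  rfl

theorem PosSemidef.zeroRowCol [Fintype n] [Ring R] [PartialOrder R] [StarRing R]
    {A : Matrix n n R} (hA : A.PosSemidef) (a : n) : (A.zeroRowCol a).PosSemidef := by
  set D : Matrix n n R := diagonal fun j => if j = a then 0 else 1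
  have hD : Dᴴ = D := by
    simp only [D, diagonal_conjTranspose]
    congr 1
    ext j
    by_cases hj : j = a <;> simp [hj]
  have hconj : A.zeroRowCol a = D * A * Dᴴ := by
    ext i j
    by_cases hi : i = a <;> by_cases hj : j = a <;> simp [hD, D, hi, hj]
  rw [hconj]
  exact hA.mul_mul_conjTranspose_same D

end Matrix

section SDP

open Sum

variable {k d : ℕ} {Z Z' : Fin k → Fin d → ℝ} {μt : Fin d → ℝ} {r r' : ℝ}
  {Q : Matrix (Unit ⊕ Fin k ⊕ Fin d) (Unit ⊕ Fin k ⊕ Fin d) ℝ}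

def sdpObjective (Q : Matrix (Unit ⊕ Fin k ⊕ Fin d) (Unit ⊕ Fin k ⊕ Fin d) ℝ) : ℝ :=
  ∑ i : Fin k, Q (inr (inl i)) (inr (inl i))

theorem sdpVal_eq_sSup :
    sdpVal Z μt r = sSup (sdpObjective '' {Q | sdpFeasible Z μt r Q}) :=
  rfl

theorem sdpObjective_zeroRowCol (i₀ : Fin k) :
    sdpObjective (Q.zeroRowCol (inr (inl i₀))) =
      sdpObjective Q - Q (inr (inl i₀)) (inr (inl i₀)) := by
  simp only [sdpObjective, Matrix.zeroRowCol_apply, Sum.inr.injEq, Sum.inl.injEq, or_self]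
  rw [eq_sub_iff_add_eq, ← Finset.sum_erase_add _ _ (Finset.mem_univ i₀)]
  simp [Finset.sum_ite, Finset.filter_ne']

namespace sdpFeasible

theorem diag_nonneg (hQ : sdpFeasible Z μt r Q) (i : Fin k) :
    0 ≤ Q (inr (inl i)) (inr (inl i)) :=
  hQ.1.diag_nonneg

theorem diag_le_one (hQ : sdpFeasible Z μt r Q) (i : Fin k) :
    Q (inr (inl i)) (inr (inl i)) ≤ 1 := by
  obtain ⟨hpsd, hcorner, hdiag, -, -⟩ := hQ
  have hminor := hpsd.apply_mul_apply_le (inl ()) (inr (inl i))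
  have hsymm : Q (inr (inl i)) (inl ()) = Q (inl ()) (inr (inl i)) := hpsd.1.apply _ _
  rw [hcorner, one_mul, hsymm, ← hdiag i] at hminor
  nlinarith [hpsd.diag_nonneg (i := inr (inl i))]

theorem of_le_radius (hQ : sdpFeasible Z μt r Q) (hr : r' ≤ r) : sdpFeasible Z μt r' Q := by
  obtain ⟨hpsd, hcorner, hdiag, htrace, hcon⟩ := hQ
  exact ⟨hpsd, hcorner, hdiag, htrace, fun i =>
    (mul_le_mul_of_nonneg_left hr (hpsd.diag_nonneg (i := inr (inl i)))).trans (hcon i)⟩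

theorem zeroRowCol (hQ : sdpFeasible Z μt r Q) {i₀ : Fin k}
    (hZ : ∀ i, i ≠ i₀ → Z i = Z' i) :
    sdpFeasible Z' μt r (Q.zeroRowCol (inr (inl i₀))) := by
  obtain ⟨hpsd, hcorner, hdiag, htrace, hcon⟩ := hQ
  refine ⟨hpsd.zeroRowCol _, by simpa using hcorner, fun i => ?_, by simpa using htrace,
    fun i => ?_⟩
  · by_cases hi : i = i₀ <;> simp [hi, hdiag i]
  · by_cases hi : i = i₀
    · simp [hi]
    · simpa [hi, hZ i hi] using hcon i

end sdpFeasible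

theorem sdpObjective_le_card (hQ : sdpFeasible Z μt r Q) : sdpObjective Q ≤ k := by
  calc sdpObjective Q ≤ ∑ _i : Fin k, (1 : ℝ) := Finset.sum_le_sum fun i _ => hQ.diag_le_one i
    _ = k := by simp

theorem le_sdpVal (hQ : sdpFeasible Z μt r Q) : sdpObjective Q ≤ sdpVal Z μt r :=
  le_csSup ⟨k, by rintro _ ⟨Q', hQ', rfl⟩; exact sdpObjective_le_card hQ'⟩ ⟨Q, hQ, rfl⟩

theorem sdpVal_nonneg : 0 ≤ sdpVal Z μt r := by
  refine Real.sSup_nonneg ?_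
  rintro _ ⟨Q, hQ, rfl⟩
  exact Finset.sum_nonneg fun i _ => hQ.diag_nonneg i

theorem sdpVal_le_add_of_forall_feasible {c : ℝ} (hc : 0 ≤ c)
    (h : ∀ Q, sdpFeasible Z μt r Q →
      ∃ Q', sdpFeasible Z' μt r' Q' ∧ sdpObjective Q ≤ sdpObjective Q' + c) :
    sdpVal Z μt r ≤ sdpVal Z' μt r' + c := by
  rw [sdpVal_eq_sSup]
  refine Real.sSup_le ?_ (add_nonneg sdpVal_nonneg hc)
  rintro _ ⟨Q, hQ, rfl⟩
  obtain ⟨Q', hQ', hle⟩ := h Q hQ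
  linarith [le_sdpVal hQ']

theorem sdpVal_antitone_radius (hr : r' ≤ r) : sdpVal Z μt r ≤ sdpVal Z μt r' := by
  simpa using sdpVal_le_add_of_forall_feasible le_rfl fun Q hQ =>
    ⟨Q, hQ.of_le_radius hr, by simp⟩

theorem sdpVal_le_add_one_of_eq_of_ne {i₀ : Fin k} (hZ : ∀ i, i ≠ i₀ → Z i = Z' i) :
    sdpVal Z μt r ≤ sdpVal Z' μt r + 1 :=
  sdpVal_le_add_of_forall_feasible zero_le_one fun Q hQ =>
    ⟨_, hQ.zeroRowCol hZ, by
      rw [sdpObjective_zeroRowCol]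
      linarith [hQ.diag_le_one i₀]⟩

end SDP

/-- The SDP value is nonincreasing in the radius `r`, and has sensitivity `1`
with respect to replacing a single data point `Z_i`. -/
theorem sdpVal_monotone_and_sensitivity {k d : ℕ}
    (Z Z' : Fin k → Fin d → ℝ) (μt : Fin d → ℝ) :
    (∀ r r' : ℝ, 0 ≤ r' → r' ≤ r → sdpVal Z μt r ≤ sdpVal Z μt r') ∧
    (∀ r : ℝ, 0 ≤ r → (∃ i₀, ∀ i, i ≠ i₀ → Z i = Z' i) →
      |sdpVal Z μt r - sdpVal Z' μt r| ≤ 1) := by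
  refine ⟨fun r r' _ hr => sdpVal_antitone_radius hr, ?_⟩
  rintro r - ⟨i₀, hZ⟩
  have hle := sdpVal_le_add_one_of_eq_of_ne (μt := μt) (r := r) hZ
  have hge := sdpVal_le_add_one_of_eq_of_ne (μt := μt) (r := r) fun i hi => (hZ i hi).symm
  exact abs_sub_le_iff.2 ⟨by linarith, by linarith⟩
end
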